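/- Let W be an integrable real random variable, α ∈ (0,1], and D, q real numbers with D < q, P(W ≤ q) = α, and E[W · 1_{W ≤ q}] = D·α. Then the infimum over all W_o > D of E[max(1 - (W - D)/(W_o - D), 0)] equals α, and it is attained at W_o = q. -/

import Mathlib

/-! For `c > D` the integrand is `(c - W)⁺ / (c - D)`. Since `(c - W)⁺ ≥ (c - W) 1_{W ≤ q}` and the
right side integrates to `c α - D α`, every value is at least `α`; for `c = q` the two integrands
coincide. -/

open MeasureTheory

section PosPart

variable {X : Type*} [MeasurableSpace X] {μ : Measure X} {f : X → ℝ}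

theorem setIntegral_le_integral_max_zero (hf : Integrable f μ) (s : Set X) :
    ∫ x in s, f x ∂μ ≤ ∫ x, max (f x) 0 ∂μ :=
  (setIntegral_mono hf.integrableOn hf.pos_part.integrableOn fun _ => le_max_left _ _).trans
    (setIntegral_le_integral hf.pos_part (ae_of_all _ fun _ => le_max_right _ _))

theorem integral_max_zero_eq_setIntegral (hf : AEStronglyMeasurable f μ) :
    ∫ x, max (f x) 0 ∂μ = ∫ x in {x | 0 ≤ f x}, f x ∂μ := by
  have hs : NullMeasurableSet {x | 0 ≤ f x} μ :=
    aestronglyMeasurable_const.nullMeasurableSet_le hf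
  rw [← setIntegral_eq_integral_of_forall_compl_eq_zero (s := {x | 0 ≤ f x})
    fun x hx => max_eq_right (not_le.1 hx).le]
  exact setIntegral_congr_fun₀ hs fun x hx => max_eq_left hx

end PosPart

theorem max_one_sub_div_zero_eq {D c : ℝ} (hc : D < c) (w : ℝ) :
    max (1 - (w - D) / (c - D)) 0 = max (c - w) 0 / (c - D) := by
  have hcD : 0 < c - D := sub_pos.2 hc
  rw [show 1 - (w - D) / (c - D) = (c - w) / (c - D) by field_simp; ring,
    ← max_div_div_right hcD.le, zero_div]

theorem stmt_8_general {Ω : Type*} [MeasurableSpace Ω] (μ : Measure Ω) [IsProbabilityMeasure μ]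
    (W : Ω → ℝ) (hW : Integrable W μ) (α : ℝ)
    (D q : ℝ) (hDq : D < q) (hq : (μ {ω | W ω ≤ q}).toReal = α)
    (hD : ∫ ω in {ω | W ω ≤ q}, W ω ∂μ = D * α) :
    IsLeast {x : ℝ | ∃ Wo : ℝ, D < Wo ∧
        x = ∫ ω, max (1 - (W ω - D) / (Wo - D)) 0 ∂μ} α ∧
    ∫ ω, max (1 - (W ω - D) / (q - D)) 0 ∂μ = α := by
  have hshift (c : ℝ) : Integrable (fun ω => c - W ω) μ := (integrable_const c).sub hW
  have tail (c : ℝ) : ∫ ω in {ω | W ω ≤ q}, (c - W ω) ∂μ = (c - D) * α := by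
    rw [integral_sub (integrable_const c) hW.integrableOn,
      setIntegral_const, hD, smul_eq_mul, measureReal_def, hq]
    ring
  have bPoE {c : ℝ} (hc : D < c) : ∫ ω, max (1 - (W ω - D) / (c - D)) 0 ∂μ
      = (∫ ω, max (c - W ω) 0 ∂μ) / (c - D) := by
    simp_rw [max_one_sub_div_zero_eq hc, integral_div]
  have at_q : ∫ ω, max (q - W ω) 0 ∂μ = (q - D) * α := by
    rw [integral_max_zero_eq_setIntegral (hshift q).aestronglyMeasurable, ← tail]
    simp only [sub_nonneg]
  have hmin : ∫ ω, max (1 - (W ω - D) / (q - D)) 0 ∂μ = α := by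
    rw [bPoE hDq, at_q, mul_div_cancel_left₀ _ (sub_pos.2 hDq).ne']
  refine ⟨⟨⟨q, hDq, hmin.symm⟩, ?_⟩, hmin⟩
  rintro _ ⟨c, hc, rfl⟩
  rw [bPoE hc, le_div_iff₀ (sub_pos.2 hc), mul_comm, ← tail]
  exact setIntegral_le_integral_max_zero (hshift c) _

theorem stmt_8 {Ω : Type*} [MeasurableSpace Ω] (μ : Measure Ω) [IsProbabilityMeasure μ]
    (W : Ω → ℝ) (hW : Integrable W μ) (α : ℝ) (hα : α ∈ Set.Ioc (0 : ℝ) 1)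
    (D q : ℝ) (hDq : D < q) (hq : (μ {ω | W ω ≤ q}).toReal = α)
    (hD : ∫ ω in {ω | W ω ≤ q}, W ω ∂μ = D * α) :
    IsLeast {x : ℝ | ∃ Wo : ℝ, D < Wo ∧
        x = ∫ ω, max (1 - (W ω - D) / (Wo - D)) 0 ∂μ} α ∧
    ∫ ω, max (1 - (W ω - D) / (q - D)) 0 ∂μ = α :=
  stmt_8_general μ W hW α D q hDq hq hD
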